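/- Let B be a smooth projective surface, E a rank 2 bundle on B, F a sub-line-bundle with locally free quotient G = E/F, and suppose χ(F ⊗ L^k) = χ(E ⊗ L^k)/2 for all k, and additionally either c1(B) = 0 or ω = ±c1(B) where ω = c1(L). Then all four coefficients C_1, C_2, C_3, C_4 in the expansion F_1 = C_1k³ + C_2k² + C_3k + C_4 of the Futaki invariant of the test configuration associated to F vanish. -/
import Mathlib

/-- Vanishing of all coefficients of the Futaki invariant `F₁ = C₁k³+C₂k²+C₃k+C₄`
of the test configuration associated to a sub-line-bundle `F` of a rank 2 bundle `E`
on a polarised surface `(B,L)` with locally free quotient, under the hypotheses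
`χ(F⊗L^k) = χ(E⊗L^k)/2` for all `k` and (`c1(B) = 0` or `ω = ±c1(B)`).
Intersection numbers: `w2 = ω²`, `dE = c1(E)·ω`, `dF = c1(F)·ω`, `dB = c1(B)·ω`,
`EE = c1(E)²`, `EB = c1(E)·c1(B)`, `FB = c1(F)·c1(B)`; slopes `μE = dE/2`,
`μF = dF`.  The coefficients `C₁,…,C₄` are given by the explicit formulas of the
paper and `χ(F⊗L^k)`, `χ(E⊗L^k)` by Riemann–Roch. -/
theorem futaki_coefficients_all_vanish
    (w2 dE dF dB EE EB FB ch2E ch2F Td2 μE μF C1 C2 C3 C4 : ℝ)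
    (hμE : μE = dE / 2) (hμF : μF = dF)
    (hC1 : C1 = w2 / 12 * (μE - μF))
    (hC2 : C2 = w2 / 24 * (EB / 2 - FB) + w2 / 6 * (ch2E / 2 - ch2F)
        + (1 / 12) * (2 * dE - dB) * (μE - μF))
    (hC3 : 48 * C3 = (8 * dE - 4 * dB) * (ch2E / 2 - ch2F)
        + 2 * EE * (dE / 2 - dF) + 2 * dF * EB - 2 * dE * FB)
    (hC4 : 144 * C4 = EE * ((EB / 2 - FB) + 6 * (ch2E / 2 - ch2F))
        - 4 * EB * (ch2E / 2 - ch2F) + 2 * (EB * ch2F - FB * ch2E))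
    -- χ(F⊗L^k) = χ(E⊗L^k)/2 for all k, via Riemann–Roch on the surface:
    (hchi : ∀ k : ℕ,
      (k : ℝ) ^ 2 * w2 / 2 + (k : ℝ) * (dF + dB / 2) + ch2F + FB / 2 + Td2
        = ((k : ℝ) ^ 2 * w2 + (k : ℝ) * (dE + dB) + ch2E + EB / 2 + 2 * Td2) / 2)
    -- either c1(B) = 0 or ω = ±c1(B), at the level of intersection numbers:
    (hB : (dB = 0 ∧ EB = 0 ∧ FB = 0) ∨
      (∃ ε : ℝ, (ε = 1 ∨ ε = -1) ∧ dB = ε * w2 ∧ EB = ε * dE ∧ FB = ε * dF)) :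
    C1 = 0 ∧ C2 = 0 ∧ C3 = 0 ∧ C4 = 0 := by
  have h0 := hchi 0
  have h1 := hchi 1
  push_cast at h0 h1
  have hd : dF = dE / 2 := by linarith
  have hc : ch2F + FB / 2 = ch2E / 2 + EB / 4 := by linarith
  subst hμE hμF hd
  rcases hB with ⟨hdB, hEB, hFB⟩ | ⟨ε, hε, hdB, hEB, hFB⟩
  · subst hdB hEB hFB
    have hch : ch2F = ch2E / 2 := by linarith
    subst hch
    exact ⟨by linear_combination hC1, by linear_combination hC2,
      by linear_combination hC3 / 48, by linear_combination hC4 / 144⟩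
  · subst hdB hEB hFB
    have hch : ch2F = ch2E / 2 := by linarith
    subst hch
    exact ⟨by linear_combination hC1, by linear_combination hC2,
      by linear_combination hC3 / 48, by linear_combination hC4 / 144⟩
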